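/- Let (H,R) be a quasitriangular bialgebra, B ⊆ H a subalgebra, (ψ,J) a twist pair and k an invertible element satisfying the coproduct identity Δ(k)=J⁻¹(1⊗k)(ψ⊗id)(R)(k⊗1) and k·b = ψ(b)·k for all b ∈ B. Then for n = 2, the assignments σ₀ ↦ (ψ⁻¹⊗id) ∘ (multiplication by k⊗1) and σ₁ ↦ (flip) ∘ (multiplication by R) define operators on H⊗H satisfying the type B braid relation σ₀σ₁σ₀σ₁ = σ₁σ₀σ₁σ₀. -/

import Mathlib

/-!
Write `σ₀ = (ψ⁻¹ ⊗ id) ∘ L_{k⊗1}` and `σ₁ = τ ∘ L_R`, where `L` is left multiplication and `τ`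
the flip. Since `ψ⁻¹ ⊗ id` and `τ` are algebra maps they can be moved past the left
multiplications, and on both sides of the braid relation they compose to `ψ⁻¹ ⊗ ψ⁻¹`. The
relation therefore reduces to an identity in `H ⊗ H`, which after applying `ψ ⊗ ψ` is the
`ψ`-twisted reflection equation. That equation is obtained by inserting
`Δ(k) = J⁻¹(1⊗k)R^ψ(k⊗1)` into `R Δ(k) = Δ^op(k) R` and using `(ψ⊗ψ)(R₂₁) = J₂₁ R J⁻¹`.
-/

noncomputable section
open TensorProduct

variable (F : Type*) [CommRing F] (H : Type*) [Ring H] [Bialgebra F H]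

/-- The flip map on `H ⊗ H`. -/
def τ₂ : H ⊗[F] H ≃ₐ[F] H ⊗[F] H := Algebra.TensorProduct.comm F H H

/-- Embedding of `H ⊗ H` into the first two factors of `(H ⊗ H) ⊗ H`. -/
def ι₁₂ : H ⊗[F] H →ₐ[F] (H ⊗[F] H) ⊗[F] H := Algebra.TensorProduct.includeLeft

/-- Embedding of `H ⊗ H` into the last two factors of `(H ⊗ H) ⊗ H`. -/
def ι₂₃ : H ⊗[F] H →ₐ[F] (H ⊗[F] H) ⊗[F] H :=
  Algebra.TensorProduct.map Algebra.TensorProduct.includeRight (AlgHom.id F H)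

/-- Embedding of `H ⊗ H` into the outer factors of `(H ⊗ H) ⊗ H`. -/
def ι₁₃ : H ⊗[F] H →ₐ[F] (H ⊗[F] H) ⊗[F] H :=
  Algebra.TensorProduct.map Algebra.TensorProduct.includeLeft (AlgHom.id F H)

/-- The image in `(H⊗H)ˣ` of a unit under the flip map. -/
def uflip (R : (H ⊗[F] H)ˣ) : (H ⊗[F] H)ˣ :=
  ⟨τ₂ F H ↑R, τ₂ F H ↑R⁻¹,
    by rw [← map_mul, Units.mul_inv, map_one],
    by rw [← map_mul, Units.inv_mul, map_one]⟩

/-- Conjugation by a unit, as an algebra automorphism. -/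
def Ad {A : Type*} [Ring A] [Algebra F A] (u : Aˣ) : A ≃ₐ[F] A where
  toFun x := ↑u * x * ↑u⁻¹
  invFun x := ↑u⁻¹ * x * ↑u
  left_inv x := by simp [mul_assoc]
  right_inv x := by simp [mul_assoc]
  map_mul' x y := by simp [mul_assoc]
  map_add' x y := by rw [mul_add, add_mul]
  commutes' r := by rw [← Algebra.commutes, mul_assoc, Units.mul_inv, mul_one]

/-- The unit `(g ⊗ g)` of `H ⊗ H` attached to a unit `g` of `H`. -/
def uTmul (g : Hˣ) : (H ⊗[F] H)ˣ :=
  ⟨(↑g : H) ⊗ₜ[F] (↑g : H), (↑g⁻¹ : H) ⊗ₜ[F] (↑g⁻¹ : H),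
    by rw [Algebra.TensorProduct.tmul_mul_tmul, Units.mul_inv, ← Algebra.TensorProduct.one_def],
    by rw [Algebra.TensorProduct.tmul_mul_tmul, Units.inv_mul, ← Algebra.TensorProduct.one_def]⟩

/-- The comultiplication of the bialgebra `H`. -/
def Δ : H →ₐ[F] H ⊗[F] H := Bialgebra.comulAlgHom F H

/-- The counit of the bialgebra `H`. -/
def ε : H →ₐ[F] F := Bialgebra.counitAlgHom F H

/-- The opposite comultiplication `Δ^op = flip ∘ Δ`. -/
def Δop : H →ₐ[F] H ⊗[F] H := (τ₂ F H).toAlgHom.comp (Δ F H)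

/-- `(Δ ⊗ id)` as a map `H ⊗ H → (H ⊗ H) ⊗ H`. -/
def Δ₁ : H ⊗[F] H →ₐ[F] (H ⊗[F] H) ⊗[F] H :=
  Algebra.TensorProduct.map (Δ F H) (AlgHom.id F H)

/-- `(id ⊗ Δ)`, reassociated into `(H ⊗ H) ⊗ H`. -/
def Δ₂ : H ⊗[F] H →ₐ[F] (H ⊗[F] H) ⊗[F] H :=
  ((Algebra.TensorProduct.assoc F F F H H H).symm.toAlgHom).comp
    (Algebra.TensorProduct.map (AlgHom.id F H) (Δ F H))

/-- Quasitriangularity of an invertible `R ∈ H ⊗ H` with respect to a coproduct `Δ'`: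
`R Δ'(x) = Δ'^op(x) R`, `(Δ'⊗id)(R) = R₁₃R₂₃` and `(id⊗Δ')(R) = R₁₃R₁₂`. -/
def IsQuasiTri (Δ' : H →ₐ[F] H ⊗[F] H) (R : (H ⊗[F] H)ˣ) : Prop :=
  (∀ x : H, (↑R : H ⊗[F] H) * Δ' x = τ₂ F H (Δ' x) * ↑R) ∧
  (Algebra.TensorProduct.map Δ' (AlgHom.id F H)) (↑R : H ⊗[F] H)
      = ι₁₃ F H ↑R * ι₂₃ F H ↑R ∧
  ((Algebra.TensorProduct.assoc F F F H H H).symm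
      ((Algebra.TensorProduct.map (AlgHom.id F H) Δ') (↑R : H ⊗[F] H)))
      = ι₁₃ F H ↑R * ι₁₂ F H ↑R

/-- The unit of `H ⊗ H` obtained by applying `Δ` to a unit of `H`. -/
def uComul (g : Hˣ) : (H ⊗[F] H)ˣ :=
  ⟨Δ F H ↑g, Δ F H ↑g⁻¹,
    by rw [← map_mul, Units.mul_inv, map_one],
    by rw [← map_mul, Units.inv_mul, map_one]⟩

/-- A Drinfeld twist: an invertible `J ∈ H ⊗ H` with `(ε⊗id)(J) = 1 = (id⊗ε)(J)`
satisfying the cocycle identity `(J⊗1)(Δ⊗id)(J) = (1⊗J)(id⊗Δ)(J)`. -/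
def IsTwist (J : (H ⊗[F] H)ˣ) : Prop :=
  (Algebra.TensorProduct.lid F H)
      ((Algebra.TensorProduct.map (ε F H) (AlgHom.id F H)) ↑J) = 1 ∧
  (Algebra.TensorProduct.rid F F H)
      ((Algebra.TensorProduct.map (AlgHom.id F H) (ε F H)) ↑J) = 1 ∧
  ι₁₂ F H ↑J * Δ₁ F H ↑J = ι₂₃ F H ↑J * Δ₂ F H ↑J

/-- A twist pair `(ψ, J)`: `Δ^{op,ψ} = Ad(J) ∘ Δ` and `(ψ⊗ψ)(R₂₁) = J₂₁ R J⁻¹`. -/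
def TwistPair (R : (H ⊗[F] H)ˣ) (ψ : H ≃ₐ[F] H) (J : (H ⊗[F] H)ˣ) : Prop :=
  (∀ x : H, (Algebra.TensorProduct.map ψ.toAlgHom ψ.toAlgHom)
      (τ₂ F H (Δ F H (ψ.symm x))) = ↑J * Δ F H x * ↑J⁻¹) ∧
  ((Algebra.TensorProduct.map ψ.toAlgHom ψ.toAlgHom) (τ₂ F H ↑R)
      = ↑(uflip F H J) * ↑R * ↑J⁻¹)

/-- The operator `σ₀ = (ψ⁻¹ ⊗ id) ∘ (left multiplication by k ⊗ 1)` on `H ⊗ H`. -/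
def σ₀ (ψ : H ≃ₐ[F] H) (k : Hˣ) : H ⊗[F] H →ₗ[F] H ⊗[F] H :=
  (Algebra.TensorProduct.map ψ.symm.toAlgHom (AlgHom.id F H)).toLinearMap ∘ₗ
    LinearMap.mulLeft F ((↑k : H) ⊗ₜ[F] (1 : H))

/-- The operator `σ₁ = flip ∘ (left multiplication by R)` on `H ⊗ H`. -/
def σ₁ (R : (H ⊗[F] H)ˣ) : H ⊗[F] H →ₗ[F] H ⊗[F] H :=
  (τ₂ F H).toLinearMap ∘ₗ LinearMap.mulLeft F (↑R : H ⊗[F] H)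


theorem Algebra.TensorProduct.map_map_apply {R A B C D E G : Type*} [CommSemiring R]
    [Semiring A] [Semiring B] [Semiring C] [Semiring D] [Semiring E] [Semiring G]
    [Algebra R A] [Algebra R B] [Algebra R C] [Algebra R D] [Algebra R E] [Algebra R G]
    (f₂ : C →ₐ[R] E) (g₂ : D →ₐ[R] G) (f₁ : A →ₐ[R] C) (g₁ : B →ₐ[R] D) (x : A ⊗[R] B) :
    map f₂ g₂ (map f₁ g₁ x) = map (f₂.comp f₁) (g₂.comp g₁) x := by
  rw [map_comp, AlgHom.comp_apply]

/-- `(k⊗1)(R^ψ)₂₁(1⊗k)R = (ψ⊗ψ)(R₂₁)(1⊗k)R^ψ(k⊗1)`, where `R^ψ = (ψ⊗id)(R)`. -/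
def TwistedReflectionEquation (R : (H ⊗[F] H)ˣ) (ψ : H ≃ₐ[F] H) (k : Hˣ) : Prop :=
  ((k : H) ⊗ₜ[F] (1 : H)) * τ₂ F H (Algebra.TensorProduct.map ψ.toAlgHom (AlgHom.id F H) R)
      * ((1 : H) ⊗ₜ[F] (k : H)) * R
    = Algebra.TensorProduct.map ψ.toAlgHom ψ.toAlgHom (τ₂ F H R) * ((1 : H) ⊗ₜ[F] (k : H))
      * Algebra.TensorProduct.map ψ.toAlgHom (AlgHom.id F H) R * ((k : H) ⊗ₜ[F] (1 : H))

section

variable {F H}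

lemma τ₂_tmul (a b : H) : τ₂ F H (a ⊗ₜ b) = b ⊗ₜ a :=
  rfl

lemma τ₂_τ₂ (x : H ⊗[F] H) : τ₂ F H (τ₂ F H x) = x :=
  (τ₂ F H).symm_apply_apply x

lemma τ₂_map_apply (f g : H →ₐ[F] H) (x : H ⊗[F] H) :
    τ₂ F H (Algebra.TensorProduct.map f g x) = Algebra.TensorProduct.map g f (τ₂ F H x) :=
  Algebra.TensorProduct.comm_comp_map_apply f g x

lemma σ₀_apply (ψ : H ≃ₐ[F] H) (k : Hˣ) (x : H ⊗[F] H) :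
    σ₀ F H ψ k x
      = (ψ.symm k ⊗ₜ 1) * Algebra.TensorProduct.map ψ.symm.toAlgHom (AlgHom.id F H) x := by
  rw [σ₀, LinearMap.comp_apply, AlgHom.toLinearMap_apply, LinearMap.mulLeft_apply, map_mul,
    Algebra.TensorProduct.map_tmul, map_one]
  rfl

lemma σ₁_apply (R : (H ⊗[F] H)ˣ) (x : H ⊗[F] H) :
    σ₁ F H R x = τ₂ F H R * τ₂ F H x :=
  map_mul (τ₂ F H) _ _

theorem twistedReflectionEquation_of_twistPair {R J : (H ⊗[F] H)ˣ} {ψ : H ≃ₐ[F] H} {k : Hˣ}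
    (hR : IsQuasiTri F H (Δ F H) R) (hpair : TwistPair F H R ψ J)
    (hk : Δ F H ↑k
        = ↑J⁻¹ * ((1 : H) ⊗ₜ[F] (↑k : H))
            * (Algebra.TensorProduct.map ψ.toAlgHom (AlgHom.id F H)) ↑R
            * ((↑k : H) ⊗ₜ[F] (1 : H))) :
    TwistedReflectionEquation F H R ψ k := by
  unfold TwistedReflectionEquation
  set Rψ := Algebra.TensorProduct.map ψ.toAlgHom (AlgHom.id F H) (R : H ⊗[F] H)
  have hJk : (J : H ⊗[F] H) * Δ F H k = (1 ⊗ₜ (k : H)) * Rψ * ((k : H) ⊗ₜ 1) := by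
    rw [hk, ← mul_assoc, ← mul_assoc, ← mul_assoc, Units.mul_inv, one_mul]
  calc ((k : H) ⊗ₜ[F] (1 : H)) * τ₂ F H Rψ * ((1 : H) ⊗ₜ[F] (k : H)) * R
      = τ₂ F H ((1 ⊗ₜ (k : H)) * Rψ * ((k : H) ⊗ₜ 1)) * R := by
        rw [map_mul, map_mul, τ₂_tmul, τ₂_tmul]
    _ = τ₂ F H J * (τ₂ F H (Δ F H k) * R) := by
        rw [← hJk, map_mul, mul_assoc]
    _ = τ₂ F H J * (R * Δ F H k) := by
        rw [hR.1]
    _ = _ := by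
        rw [hpair.2, hk, uflip]
        simp only [mul_assoc]

theorem braid_relation_of_twistedReflectionEquation {R : (H ⊗[F] H)ˣ} {ψ : H ≃ₐ[F] H}
    {k : Hˣ} (h : TwistedReflectionEquation F H R ψ k) :
    σ₀ F H ψ k ∘ₗ σ₁ F H R ∘ₗ σ₀ F H ψ k ∘ₗ σ₁ F H R
      = σ₁ F H R ∘ₗ σ₀ F H ψ k ∘ₗ σ₁ F H R ∘ₗ σ₀ F H ψ k := by
  have hΨ := congrArg (Algebra.TensorProduct.map ψ.symm.toAlgHom ψ.symm.toAlgHom) h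
  simp only [map_mul, τ₂_map_apply, Algebra.TensorProduct.map_map_apply,
    Algebra.TensorProduct.map_tmul, AlgEquiv.coe_toAlgHom, AlgEquiv.symm_comp, AlgHom.comp_id,
    Algebra.TensorProduct.map_id, AlgHom.id_apply, map_one] at hΨ
  refine LinearMap.ext fun x => ?_
  -- both sides become an element of `H ⊗ H` times `(ψ⁻¹ ⊗ ψ⁻¹) x`
  simp only [LinearMap.comp_apply, σ₀_apply, σ₁_apply, map_mul, τ₂_tmul, τ₂_map_apply, τ₂_τ₂,
    Algebra.TensorProduct.map_map_apply, Algebra.TensorProduct.map_tmul, AlgHom.comp_id,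
    AlgHom.id_comp, map_one, AlgHom.id_apply, ← mul_assoc]
  rw [hΨ]

end

theorem type_B_braid_relation (R J : (H ⊗[F] H)ˣ) (ψ : H ≃ₐ[F] H) (k : Hˣ)
    (hR : IsQuasiTri F H (Δ F H) R)
    (hpair : TwistPair F H R ψ J)
    (hk : Δ F H ↑k
        = ↑J⁻¹ * ((1 : H) ⊗ₜ[F] (↑k : H))
            * (Algebra.TensorProduct.map ψ.toAlgHom (AlgHom.id F H)) ↑R
            * ((↑k : H) ⊗ₜ[F] (1 : H))) :
    σ₀ F H ψ k ∘ₗ σ₁ F H R ∘ₗ σ₀ F H ψ k ∘ₗ σ₁ F H R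
      = σ₁ F H R ∘ₗ σ₀ F H ψ k ∘ₗ σ₁ F H R ∘ₗ σ₀ F H ψ k :=
  braid_relation_of_twistedReflectionEquation (twistedReflectionEquation_of_twistPair hR hpair hk)

end
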